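/- Let d ≥ 1 and let β^t ∈ ℝ^d (Euclidean norm) have at least one nonzero coordinate; set β^s = min{|β^t_i| : β^t_i ≠ 0} and fix 0 < δ < β^s. For v ∈ ℝ^d write ‖v‖₀ for the number of nonzero coordinates of v. Let C ⊆ ℝ^d be a set with C ⊆ {β : ‖β − β^t‖₂ ≤ δ}, and suppose t ∈ C has support equal to the support of β^t. Then every v ∈ C with ‖v‖₀ ≤ ‖t‖₀ has support exactly equal to the support of β^t. -/
import Mathlib

open Set Metric

/-- The ℓ₀ "norm" of a vector: the number of nonzero coordinates. -/
noncomputable def l0norm {d : ℕ} (v : EuclideanSpace ℝ (Fin d)) : ℕ :=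
  (Finset.univ.filter (fun i => v i ≠ 0)).card

lemma coord_le_norm {d : ℕ} (x : EuclideanSpace ℝ (Fin d)) (i : Fin d) :
    |x i| ≤ ‖x‖ := by
  rw [EuclideanSpace.norm_eq]
  rw [show |x i| = Real.sqrt (‖x i‖ ^ 2) by rw [Real.sqrt_sq_eq_abs]; simp]
  apply Real.sqrt_le_sqrt
  exact Finset.single_le_sum (f := fun j => ‖x j‖ ^ 2)
    (fun j _ => by positivity) (Finset.mem_univ i)

/-- Deterministic core of Theorem 1(ii): if `C` is contained in the closed ball
of radius `δ < βs` around `βt`, and `t ∈ C` has the same support as `βt`, then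
any `v ∈ C` with `‖v‖₀ ≤ ‖t‖₀` has support exactly the support of `βt`. -/
theorem l0_minimizer_support_eq {d : ℕ} (hd : 1 ≤ d)
    (βt : EuclideanSpace ℝ (Fin d)) (hβt : ∃ i, βt i ≠ 0) (βs δ : ℝ)
    (hβs : IsLeast {x : ℝ | ∃ i, βt i ≠ 0 ∧ x = |βt i|} βs)
    (hδ0 : 0 < δ) (hδ : δ < βs)
    (C : Set (EuclideanSpace ℝ (Fin d))) (hC : C ⊆ closedBall βt δ)
    (t : EuclideanSpace ℝ (Fin d)) (htC : t ∈ C)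
    (ht : {i | t i ≠ 0} = {i | βt i ≠ 0}) :
    ∀ v ∈ C, l0norm v ≤ l0norm t → {i | v i ≠ 0} = {i | βt i ≠ 0} := by
  intro v hvC hle
  -- support βt ⊆ support v
  have hsub : ∀ i, βt i ≠ 0 → v i ≠ 0 := by
    intro i hi hvi
    have hdist : dist v βt ≤ δ := mem_closedBall.mp (hC hvC)
    have h1 : |v i - βt i| ≤ δ := by
      have := coord_le_norm (v - βt) i
      simp only [PiLp.sub_apply] at this
      calc |v i - βt i| ≤ ‖v - βt‖ := this
        _ = dist v βt := (dist_eq_norm v βt).symm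
        _ ≤ δ := hdist
    have h2 : βs ≤ |βt i| := hβs.2 ⟨i, hi, rfl⟩
    rw [hvi, zero_sub, abs_neg] at h1
    linarith
  have hsubset : (Finset.univ.filter (fun i => βt i ≠ 0)) ⊆
      (Finset.univ.filter (fun i => v i ≠ 0)) := by
    intro i hi
    simp only [Finset.mem_filter, Finset.mem_univ, true_and] at hi ⊢
    exact hsub i hi
  have hcardt : l0norm t = l0norm βt := by
    unfold l0norm
    congr 1
    ext i
    simp only [Finset.mem_filter, Finset.mem_univ, true_and]
    exact Set.ext_iff.mp ht i
  have heq : (Finset.univ.filter (fun i => v i ≠ 0)) =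
      (Finset.univ.filter (fun i => βt i ≠ 0)) := by
    apply (Finset.eq_of_subset_of_card_le hsubset _).symm
    rw [hcardt] at hle
    exact hle
  ext i
  simp only [Set.mem_setOf_eq]
  have := Finset.ext_iff.mp heq i
  simpa using this
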